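/- If a row vector π with blocks π_k (k ∈ ℤ) satisfies π_k = c·π̃₁ R₁⋯R_{k−1} for k ≥ 2, π_k = c·π̃_{−1} ℝ_{−1}⋯ℝ_{k+1} for k ≤ −2, boundary blocks π_{±1} = c π̃_{±1}, π₀ = c π̃₀, where the tilded vectors solve the three boundary equations π̃_{−1}ℝ_{−1}B₂^{(−2)} + π̃_{−1}B₁^{(−1)} + π̃₀B₀^{(0)} = 0, π̃_{−1}B₂^{(−1)} + π̃₀(B₁^{(0)}+A₁^{(0)}) + π̃₁A₂^{(1)} = 0, π̃₀A₀^{(0)} + π̃₁A₁^{(1)} + π̃₁R₁A₂^{(2)} = 0, and {R_k}, {ℝ_k} solve A₀^{(k)} + R_k A₁^{(k+1)} + R_k R_{k+1} A₂^{(k+2)} = 0 (k ≥ 0) and B₀^{(k)} + ℝ_k B₁^{(k−1)} + ℝ_k ℝ_{k−1} B₂^{(k−2)} = 0 (k ≤ 0), then π satisfies every balance equation π_{k−1}A₀^{(k−1)} + π_k A₁^{(k)} + π_{k+1}A₂^{(k+1)} = 0 for k ≥ 2 and π_{k+1}B₀^{(k+1)} + π_k B₁^{(k)} + π_{k−1}B₂^{(k−1)}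 = 0 for k ≤ −2. -/
import Mathlib


open Matrix

/-- Interior-balance verification in Theorem 2 of the paper: if the blocks of `π`
are given by `π_k = c π̃₁ R₁⋯R_{k−1}` for `k ≥ 2`, `π_k = c π̃_{−1} ℝ_{−1}⋯ℝ_{k+1}`
for `k ≤ −2`, boundary blocks `π_{−1} = c π̃_{−1}`, `π₀ = c π̃₀`, `π₁ = c π̃₁`,
where the tilded vectors solve the three boundary equations, `{R_k}` solves
`A₀^{(k)} + R_k A₁^{(k+1)} + R_k R_{k+1} A₂^{(k+2)} = 0` (`k ≥ 0`) and `{ℝ_k}`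
solves `B₀^{(k)} + ℝ_k B₁^{(k−1)} + ℝ_k ℝ_{k−1} B₂^{(k−2)} = 0` (`k ≤ 0`), then `π`
satisfies every interior balance equation:
`π_{k−1} A₀^{(k−1)} + π_k A₁^{(k)} + π_{k+1} A₂^{(k+1)} = 0` for `k ≥ 2` and
`π_{k+1} B₀^{(k+1)} + π_k B₁^{(k)} + π_{k−1} B₂^{(k−1)} = 0` for `k ≤ −2`. -/
theorem bilateral_qbd_interior_balance
    {m : ℕ}
    (A₀ A₁ A₂ : ℕ → Matrix (Fin m) (Fin m) ℝ)
    (B₀ B₁ B₂ : ℤ → Matrix (Fin m) (Fin m) ℝ)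
    (R : ℕ → Matrix (Fin m) (Fin m) ℝ)
    (Rb : ℤ → Matrix (Fin m) (Fin m) ℝ)
    (c : ℝ) (hc : 0 < c)
    (πtm1 πt0 πt1 : Matrix (Fin 1) (Fin m) ℝ)
    (π : ℤ → Matrix (Fin 1) (Fin m) ℝ)
    (hπ1 : π 1 = c • πt1) (hπ0 : π 0 = c • πt0) (hπm1 : π (-1) = c • πtm1)
    (hπpos : ∀ k : ℕ, 2 ≤ k →
      π (k : ℤ) = c • (πt1 * (((List.range (k - 1)).map (fun t => R (t + 1))).prod)))
    (hπneg : ∀ k : ℕ, 2 ≤ k →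
      π (-(k : ℤ)) = c • (πtm1 * (((List.range (k - 1)).map (fun t => Rb (-((t : ℤ) + 1)))).prod)))
    (hbd1 : πtm1 * Rb (-1) * B₂ (-2) + πtm1 * B₁ (-1) + πt0 * B₀ 0 = 0)
    (hbd2 : πtm1 * B₂ (-1) + πt0 * (B₁ 0 + A₁ 0) + πt1 * A₂ 1 = 0)
    (hbd3 : πt0 * A₀ 0 + πt1 * A₁ 1 + πt1 * R 1 * A₂ 2 = 0)
    (hR : ∀ k : ℕ, A₀ k + R k * A₁ (k + 1) + R k * R (k + 1) * A₂ (k + 2) = 0)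
    (hRb : ∀ k : ℤ, k ≤ 0 → B₀ k + Rb k * B₁ (k - 1) + Rb k * Rb (k - 1) * B₂ (k - 2) = 0) :
    (∀ k : ℕ, 2 ≤ k →
      π ((k : ℤ) - 1) * A₀ (k - 1) + π (k : ℤ) * A₁ k + π ((k : ℤ) + 1) * A₂ (k + 1) = 0) ∧
    (∀ k : ℤ, k ≤ -2 →
      π (k + 1) * B₀ (k + 1) + π k * B₁ k + π (k - 1) * B₂ (k - 1) = 0) := by

  -- abbreviations for the products
  set P : ℕ → Matrix (Fin 1) (Fin m) ℝ :=
    fun j => πt1 * (((List.range (j - 1)).map (fun t => R (t + 1))).prod) with hP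
  set Q : ℕ → Matrix (Fin 1) (Fin m) ℝ :=
    fun j => πtm1 * (((List.range (j - 1)).map (fun t => Rb (-((t : ℤ) + 1)))).prod) with hQ
  have keyP : ∀ j : ℕ, 1 ≤ j → π (j : ℤ) = c • P j := by
    intro j hj
    rcases Nat.lt_or_ge j 2 with h | h
    · interval_cases j
      simp [hP, hπ1]
    · exact hπpos j h
  have keyQ : ∀ j : ℕ, 1 ≤ j → π (-(j : ℤ)) = c • Q j := by
    intro j hj
    rcases Nat.lt_or_ge j 2 with h | h
    · interval_cases j
      simpa [hQ] using hπm1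
    · exact hπneg j h
  have stepP : ∀ n : ℕ, P (n + 2) = P (n + 1) * R (n + 1) := by
    intro n
    have h1 : n + 2 - 1 = n + 1 := by omega
    have h2 : n + 1 - 1 = n := by omega
    simp only [hP, h1, h2]
    rw [List.range_succ, List.map_append, List.prod_append]
    simp [Matrix.mul_assoc]
  have stepQ : ∀ n : ℕ, Q (n + 2) = Q (n + 1) * Rb (-((n : ℤ) + 1)) := by
    intro n
    have h1 : n + 2 - 1 = n + 1 := by omega
    have h2 : n + 1 - 1 = n := by omega
    simp only [hQ, h1, h2, List.range_succ]
    simp [Matrix.mul_assoc]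
  constructor
  · intro k hk
    obtain ⟨n, rfl⟩ : ∃ n, k = n + 2 := ⟨k - 2, by omega⟩
    have e1 : ((n + 2 : ℕ) : ℤ) - 1 = ((n + 1 : ℕ) : ℤ) := by push_cast; ring
    have e2 : ((n + 2 : ℕ) : ℤ) + 1 = ((n + 3 : ℕ) : ℤ) := by push_cast; ring
    rw [e1, e2, keyP _ (by omega), keyP _ (by omega), keyP _ (by omega)]
    have h3 : P (n + 3) = P (n + 1) * R (n + 1) * R (n + 2) := by
      have := stepP (n + 1)
      rw [this, stepP n]
    rw [h3, stepP n]
    have hr := hR (n + 1)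
    have e3 : n + 2 - 1 = n + 1 := by omega
    rw [e3]
    have : P (n + 1) * (A₀ (n + 1) + R (n + 1) * A₁ (n + 1 + 1) +
        R (n + 1) * R (n + 1 + 1) * A₂ (n + 1 + 2)) = 0 := by
      rw [hr, Matrix.mul_zero]
    rw [Matrix.mul_add, Matrix.mul_add] at this
    calc c • P (n + 1) * A₀ (n + 1) + c • (P (n + 1) * R (n + 1)) * A₁ (n + 2) +
          c • (P (n + 1) * R (n + 1) * R (n + 2)) * A₂ (n + 2 + 1)
        = c • (P (n + 1) * A₀ (n + 1) + P (n + 1) * (R (n + 1) * A₁ (n + 1 + 1)) +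
            P (n + 1) * (R (n + 1) * R (n + 1 + 1) * A₂ (n + 1 + 2))) := by
          simp only [Matrix.smul_mul, smul_add]
          ring_nf
          simp [Matrix.mul_assoc]
      _ = 0 := by rw [this, smul_zero]
  · intro k hk
    obtain ⟨n, rfl⟩ : ∃ n : ℕ, k = -((n : ℤ) + 2) := by
      refine ⟨(-k - 2).toNat, ?_⟩
      have : ((-k - 2).toNat : ℤ) = -k - 2 := Int.toNat_of_nonneg (by omega)
      omega
    have e1 : -((n : ℤ) + 2) + 1 = -((n + 1 : ℕ) : ℤ) := by push_cast; ring
    have e2 : -((n : ℤ) + 2) - 1 = -((n + 3 : ℕ) : ℤ) := by push_cast; ring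
    have e0 : -((n : ℤ) + 2) = -((n + 2 : ℕ) : ℤ) := by push_cast; ring
    rw [e1, e2, e0, keyQ _ (by omega), keyQ _ (by omega), keyQ _ (by omega)]
    have h3 : Q (n + 3) = Q (n + 1) * Rb (-((n : ℤ) + 1)) * Rb (-((n : ℤ) + 2)) := by
      have hc2 : -(((n + 1 : ℕ) : ℤ) + 1) = -((n : ℤ) + 2) := by push_cast; ring
      have := stepQ (n + 1)
      rw [hc2] at this
      rw [this, stepQ n]
    rw [h3, stepQ n]
    have hr := hRb (-((n : ℤ) + 1)) (by omega)
    have f1 : -((n : ℤ) + 1) - 1 = -((n : ℤ) + 2) := by ring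
    have f2 : -((n : ℤ) + 1) - 2 = -((n : ℤ) + 3) := by ring
    rw [f1, f2] at hr
    have key0 : Q (n + 1) * (B₀ (-((n : ℤ) + 1)) + Rb (-((n : ℤ) + 1)) * B₁ (-((n : ℤ) + 2)) +
        Rb (-((n : ℤ) + 1)) * Rb (-((n : ℤ) + 2)) * B₂ (-((n : ℤ) + 3))) = 0 := by
      rw [hr, Matrix.mul_zero]
    rw [Matrix.mul_add, Matrix.mul_add] at key0
    have g1 : -(((n + 1 : ℕ)) : ℤ) = -((n : ℤ) + 1) := by push_cast; ring
    have g2 : -(((n + 2 : ℕ)) : ℤ) = -((n : ℤ) + 2) := by push_cast; ring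
    have g3 : -(((n + 3 : ℕ)) : ℤ) = -((n : ℤ) + 3) := by push_cast; ring
    rw [g1, g2, g3]
    calc c • Q (n + 1) * B₀ (-((n : ℤ) + 1)) +
          c • (Q (n + 1) * Rb (-((n : ℤ) + 1))) * B₁ (-((n : ℤ) + 2)) +
          c • (Q (n + 1) * Rb (-((n : ℤ) + 1)) * Rb (-((n : ℤ) + 2))) * B₂ (-((n : ℤ) + 3))
        = c • (Q (n + 1) * B₀ (-((n : ℤ) + 1)) +
            Q (n + 1) * (Rb (-((n : ℤ) + 1)) * B₁ (-((n : ℤ) + 2))) +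
            Q (n + 1) * (Rb (-((n : ℤ) + 1)) * Rb (-((n : ℤ) + 2)) * B₂ (-((n : ℤ) + 3)))) := by
          simp only [Matrix.smul_mul, smul_add]
          simp [Matrix.mul_assoc]
      _ = 0 := by rw [key0, smul_zero]
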